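/- Let (X,G) be a dynamical system over a σ-compact locally compact abelian group G, d a metric on X generating its topology, and (B_n) a Følner sequence in G. For x ∈ X the following are equivalent: (i) x is mean almost periodic; (ii) for every δ>0 and every ε>0 the set of t ∈ G with Dens({s ∈ G : d(sx, t(sx)) ≥ δ}) < ε is relatively dense in G, where Dens(A) := M̄(1_A) is the upper density of A ⊆ G. -/

import Mathlib

/-!
For a measurable `f` with `0 ≤ f ≤ C`, Markov's inequality and its converse, applied to the
averages over `B n` and passed to the `limsup`, give
`δ · Dens {f ≥ δ} ≤ M̄(f) ≤ δ + C · Dens {f ≥ δ}`.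
Applied to `f = s ↦ d(s x, s (t x))`, which is bounded because `X` is compact, the left
inequality turns `M̄(f) < δ ε` into `Dens {f ≥ δ} < ε`, and the right one turns
`Dens {f ≥ ε/2} < ε / (2 (C + 1))` into `M̄(f) < ε`.
-/

open MeasureTheory Filter Topology Set Pointwise

noncomputable section

namespace APPaper

/-- A subset `A` of `G` is relatively dense if there is a compact `K ⊆ G` with
`G = ⋃_{a ∈ A} (a + K)`. -/
def RelDense {G : Type*} [AddCommGroup G] [TopologicalSpace G] (A : Set G) : Prop :=
  ∃ K : Set G, IsCompact K ∧ ∀ g : G, ∃ a ∈ A, g - a ∈ K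

/-- A continuous character of `G`, i.e. a continuous homomorphism into the unit circle
(realized inside `ℂ`). -/
def IsChar {G : Type*} [AddCommGroup G] [TopologicalSpace G] (ξ : G → ℂ) : Prop :=
  Continuous ξ ∧ (∀ t, ‖ξ t‖ = 1) ∧ ∀ s t, ξ (s + t) = ξ s * ξ t

/-- `B` is a Følner sequence (of open, relatively compact, nonempty sets) for the
measure `μ` on `G`. -/
structure IsFolner {G : Type*} [AddCommGroup G] [TopologicalSpace G] [MeasurableSpace G]
    (μ : Measure G) (B : ℕ → Set G) : Prop where
  isOpen : ∀ n, IsOpen (B n)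
  nonempty : ∀ n, (B n).Nonempty
  relCompact : ∀ n, IsCompact (closure (B n))
  folner : ∀ t : G,
    Tendsto (fun n => (μ ((B n \ (t +ᵥ B n)) ∪ ((t +ᵥ B n) \ B n))).toReal / (μ (B n)).toReal)
      atTop (𝓝 0)

/-- The average `(1/|B n|) ∫_{B n} h` of a real valued function. -/
def avg {G : Type*} [MeasurableSpace G] (μ : Measure G) (B : ℕ → Set G) (n : ℕ)
    (h : G → ℝ) : ℝ :=
  (μ (B n)).toReal⁻¹ * ∫ t in B n, h t ∂μ

/-- The average `(1/|B n|) ∫_{B n} h` of a complex valued function. -/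
def avgC {G : Type*} [MeasurableSpace G] (μ : Measure G) (B : ℕ → Set G) (n : ℕ)
    (h : G → ℂ) : ℂ :=
  (μ (B n)).toReal⁻¹ • ∫ t in B n, h t ∂μ

/-- The upper mean `M̄(h) = limsup_n (1/|B n|) ∫_{B n} h` along the Følner sequence. -/
def upperMean {G : Type*} [MeasurableSpace G] (μ : Measure G) (B : ℕ → Set G) (h : G → ℝ) : ℝ :=
  Filter.limsup (fun n => avg μ B n h) Filter.atTop

/-- The upper density `Dens(A) = M̄(1_A)` of a subset of `G`. -/
def upperDens {G : Type*} [MeasurableSpace G] (μ : Measure G) (B : ℕ → Set G) (A : Set G) : ℝ :=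
  upperMean μ B (A.indicator fun _ => (1 : ℝ))

/-- `M̄_n(h) = sup_{r ∈ G} (1/|B n|) ∫_{B n + r} h`. -/
def supAvg {G : Type*} [AddCommGroup G] [MeasurableSpace G] (μ : Measure G) (B : ℕ → Set G)
    (n : ℕ) (h : G → ℝ) : ℝ :=
  ⨆ r : G, (μ (B n)).toReal⁻¹ * ∫ t in (r +ᵥ B n), h t ∂μ

/-- A function `f : G → E` is mean almost periodic (w.r.t. `(B n)`) if for each `ε > 0` the set
of `t` with `M̄(‖f - f(· - t)‖) < ε` is relatively dense. -/
def MeanAPFun {G : Type*} [AddCommGroup G] [TopologicalSpace G] [MeasurableSpace G]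
    (μ : Measure G) (B : ℕ → Set G) {E : Type*} [NormedAddCommGroup E] (f : G → E) : Prop :=
  ∀ ε : ℝ, 0 < ε → RelDense {t : G | upperMean μ B (fun s => ‖f s - f (s - t)‖) < ε}

/-- A function `f : G → ℂ` is Besicovitch almost periodic (w.r.t. `(B n)`) if it can be
approximated, in the seminorm `M̄(|·|)`, by finite linear combinations of continuous
characters. -/
def BesicovitchAPFun {G : Type*} [AddCommGroup G] [TopologicalSpace G] [MeasurableSpace G]
    (μ : Measure G) (B : ℕ → Set G) (f : G → ℂ) : Prop :=
  ∀ ε : ℝ, 0 < ε → ∃ (k : ℕ) (ξ : Fin k → G → ℂ) (c : Fin k → ℂ),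
    (∀ j, IsChar (ξ j)) ∧ upperMean μ B (fun s => ‖f s - ∑ j, c j * ξ j s‖) < ε

/-- A function `f : G → E` is Bohr almost periodic if for every `ε > 0` the set of `t` with
`‖f - f(· - t)‖_∞ < ε` is relatively dense. -/
def BohrAPFun {G : Type*} [AddCommGroup G] [TopologicalSpace G] {E : Type*}
    [NormedAddCommGroup E] (f : G → E) : Prop :=
  ∀ ε : ℝ, 0 < ε → RelDense {t : G | (⨆ s : G, ‖f s - f (s - t)‖) < ε}

/-- The orbit `{t +ᵥ x : t ∈ G}` of a point. -/
def orbitSet (G : Type*) {X : Type*} [AddCommGroup G] [AddAction G X] (x : X) : Set X :=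
  Set.range fun t : G => t +ᵥ x

/-- The averaged pseudometric `D(x,y) = M̄(s ↦ dist(s x, s y))`. -/
def avgDist {G : Type*} [AddCommGroup G] [MeasurableSpace G] {X : Type*} [PseudoMetricSpace X]
    [AddAction G X] (μ : Measure G) (B : ℕ → Set G) (x y : X) : ℝ :=
  upperMean μ B fun s => dist (s +ᵥ x) (s +ᵥ y)

/-- A point `x` is mean almost periodic (w.r.t. the metric of `X` and `(B n)`) if for every
`ε > 0` the set `{t : D(x, t x) < ε}` is relatively dense. -/
def MeanAPPoint {G : Type*} [AddCommGroup G] [TopologicalSpace G] [MeasurableSpace G]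
    {X : Type*} [PseudoMetricSpace X] [AddAction G X] (μ : Measure G) (B : ℕ → Set G)
    (x : X) : Prop :=
  ∀ ε : ℝ, 0 < ε → RelDense {t : G | avgDist μ B x (t +ᵥ x) < ε}

/-- Mean almost periodicity of a point with respect to an abstract metric `d` on `X`. -/
def MeanAPPointWith {G : Type*} [AddCommGroup G] [TopologicalSpace G] [MeasurableSpace G]
    {X : Type*} [AddAction G X] (μ : Measure G) (B : ℕ → Set G) (d : X → X → ℝ)
    (x : X) : Prop :=
  ∀ ε : ℝ, 0 < ε → RelDense {t : G | upperMean μ B (fun s => d (s +ᵥ x) (s +ᵥ (t +ᵥ x))) < ε}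

/-- A point `x` is Besicovitch almost periodic if `t ↦ f (t +ᵥ x)` is a Besicovitch almost
periodic function for every continuous `f : X → ℂ`. -/
def BesicovitchAPPoint {G : Type*} [AddCommGroup G] [TopologicalSpace G] [MeasurableSpace G]
    {X : Type*} [TopologicalSpace X] [AddAction G X] (μ : Measure G) (B : ℕ → Set G)
    (x : X) : Prop :=
  ∀ f : C(X, ℂ), BesicovitchAPFun μ B fun t : G => f (t +ᵥ x)

/-- The averaged pseudometric `D_n(x,y) = M̄_n(s ↦ dist(s x, s y))` at level `n`. -/
def weylDist {G : Type*} [AddCommGroup G] [MeasurableSpace G] {X : Type*} [PseudoMetricSpace X]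
    [AddAction G X] (μ : Measure G) (B : ℕ → Set G) (n : ℕ) (x y : X) : ℝ :=
  supAvg μ B n fun s => dist (s +ᵥ x) (s +ᵥ y)

/-- A point `x` is Weyl almost periodic if for every `ε > 0` there is an `N` such that
`{t : D_N(x, t x) < ε}` is relatively dense. -/
def WeylAPPoint {G : Type*} [AddCommGroup G] [TopologicalSpace G] [MeasurableSpace G]
    {X : Type*} [PseudoMetricSpace X] [AddAction G X] (μ : Measure G) (B : ℕ → Set G)
    (x : X) : Prop :=
  ∀ ε : ℝ, 0 < ε → ∃ N : ℕ, RelDense {t : G | weylDist μ B N x (t +ᵥ x) < ε}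

/-- A point `y` is generic for the measure `m` along `(B n)`. -/
def IsGeneric {G : Type*} [AddCommGroup G] [MeasurableSpace G] {X : Type*}
    [TopologicalSpace X] [MeasurableSpace X] [AddAction G X] (μ : Measure G) (B : ℕ → Set G)
    (m : Measure X) (y : X) : Prop :=
  ∀ f : C(X, ℂ),
    Tendsto (fun n => avgC μ B n fun t => f (t +ᵥ y)) atTop (𝓝 (∫ z, f z ∂m))

/-- The measure `m` is invariant under the action of `G`. -/
def InvariantMeasure (G : Type*) [AddCommGroup G] {X : Type*} [MeasurableSpace X]
    [AddAction G X] (m : Measure X) : Prop :=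
  ∀ t : G, MeasurePreserving (fun x : X => t +ᵥ x) m m

/-- The measure `m` is ergodic for the action of `G`. -/
def ErgodicMeasure (G : Type*) [AddCommGroup G] {X : Type*} [MeasurableSpace X]
    [AddAction G X] (m : Measure X) : Prop :=
  ∀ A : Set X, MeasurableSet A → (∀ t : G, (fun x : X => t +ᵥ x) ⁻¹' A = A) →
    m A = 0 ∨ m A = 1

/-- `f` is an eigenfunction of `(X,G,m)` with eigenvalue the continuous character `ξ`. -/
def IsEigenfunctionWith {G : Type*} [AddCommGroup G] [TopologicalSpace G] {X : Type*}
    [MeasurableSpace X] [AddAction G X] (m : Measure X) (ξ : G → ℂ) (f : X → ℂ) : Prop :=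
  IsChar ξ ∧ MemLp f 2 m ∧ ¬ f =ᵐ[m] (fun _ => (0 : ℂ)) ∧
    ∀ t : G, (fun x => f (t +ᵥ x)) =ᵐ[m] fun x => ξ t * f x

/-- The set of eigenvalues of `(X,G,m)`. -/
def Eig (G : Type*) [AddCommGroup G] [TopologicalSpace G] {X : Type*} [MeasurableSpace X]
    [AddAction G X] (m : Measure X) : Set (G → ℂ) :=
  {ξ | ∃ f : X → ℂ, IsEigenfunctionWith m ξ f}

/-- `(X,G,m)` has pure point spectrum: `L²(X,m)` possesses an orthonormal (Hilbert) basis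
consisting of eigenfunctions. -/
def PurePointSpectrum (G : Type*) [AddCommGroup G] [TopologicalSpace G] {X : Type*}
    [MeasurableSpace X] [AddAction G X] (m : Measure X) : Prop :=
  ∃ (ι : Type) (b : HilbertBasis ι ℂ (Lp ℂ 2 m)), ∀ i : ι,
    ∃ (ξ : G → ℂ) (f : X → ℂ) (hf : MemLp f 2 m),
      IsEigenfunctionWith m ξ f ∧ b i = hf.toLp f

/-- Every eigenvalue of `(X,G,m)` admits a continuous eigenfunction. -/
def ContinuousEigenfunctions (G : Type*) [AddCommGroup G] [TopologicalSpace G] {X : Type*}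
    [TopologicalSpace X] [MeasurableSpace X] [AddAction G X] (m : Measure X) : Prop :=
  ∀ ξ ∈ Eig G m, ∃ f : X → ℂ, Continuous f ∧ IsEigenfunctionWith m ξ f

/-- The set of frequencies of a point `x`: those continuous characters `ξ` for which the
average `A((t ↦ f(t +ᵥ x)) ⋅ conj ξ)` exists and is nonzero for some `f ∈ C(X)`. -/
def Freq {G : Type*} [AddCommGroup G] [TopologicalSpace G] [MeasurableSpace G] {X : Type*}
    [TopologicalSpace X] [AddAction G X] (μ : Measure G) (B : ℕ → Set G) (x : X) :
    Set (G → ℂ) :=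
  {ξ | IsChar ξ ∧ ∃ (f : C(X, ℂ)) (c : ℂ), c ≠ 0 ∧
    Tendsto (fun n => avgC μ B n fun t => f (t +ᵥ x) * (starRingEnd ℂ) (ξ t)) atTop (𝓝 c)}

/-- Birkhoff's ergodic theorem holds along `(B n)` for `(X,G,m)`. -/
def BirkhoffAlong {G : Type*} [AddCommGroup G] [MeasurableSpace G] {X : Type*}
    [MeasurableSpace X] [AddAction G X] (μ : Measure G) (B : ℕ → Set G) (m : Measure X) :
    Prop :=
  ∀ f : X → ℂ, Integrable f m →
    ∀ᵐ x ∂m, Tendsto (fun n => avgC μ B n fun t => f (t +ᵥ x)) atTop (𝓝 (∫ z, f z ∂m))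

/-- `e` is (a representative of) the orthogonal projection in `L²(X,m)` of `f` onto the
eigenspace of `ξ`: it belongs to the eigenspace and `f - e` is orthogonal to it. -/
def IsProjOnEigenspace {G : Type*} [AddCommGroup G] {X : Type*} [MeasurableSpace X]
    [AddAction G X] (m : Measure X) (ξ : G → ℂ) (f e : X → ℂ) : Prop :=
  MemLp e 2 m ∧ (∀ t : G, (fun x => e (t +ᵥ x)) =ᵐ[m] fun x => ξ t * e x) ∧
    ∀ g : X → ℂ, MemLp g 2 m → (∀ t : G, (fun x => g (t +ᵥ x)) =ᵐ[m] fun x => ξ t * g x) →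
      ∫ x, (f x - e x) * (starRingEnd ℂ) (g x) ∂m = 0

/-- `d` is a metric on the topological space `X` which generates its topology. -/
structure IsCompatMetric {X : Type*} [TopologicalSpace X] (d : X → X → ℝ) : Prop where
  refl : ∀ x, d x x = 0
  eq_of : ∀ x y, d x y = 0 → x = y
  symm : ∀ x y, d x y = d y x
  triangle : ∀ x y z, d x z ≤ d x y + d y z
  nhds_basis : ∀ x : X, (𝓝 x).HasBasis (fun ε : ℝ => 0 < ε) fun ε => {y | d x y < ε}

/-- The metric `d̄(y,z) = sup_{s ∈ G} dist (s y) (s z)`. -/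
def supDist (G : Type*) [AddCommGroup G] {X : Type*} [PseudoMetricSpace X] [AddAction G X]
    (y z : X) : ℝ :=
  ⨆ s : G, dist (s +ᵥ y) (s +ᵥ z)

/-- The function `f_x : t ↦ f (t +ᵥ x)` as a bounded continuous function on `G`. -/
def fnAlong {G : Type*} [AddCommGroup G] [TopologicalSpace G] {X : Type*}
    [TopologicalSpace X] [CompactSpace X] [AddAction G X] [ContinuousVAdd G X]
    (f : C(X, ℂ)) (x : X) : BoundedContinuousFunction G ℂ :=
  BoundedContinuousFunction.ofNormedAddCommGroup (fun t => f (t +ᵥ x))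
    (f.continuous.comp (continuous_vadd.comp (continuous_id.prodMk continuous_const)))
    ‖f‖ (fun t => f.norm_coe_le_norm _)

/-- The translate `F(· - t)` of a bounded continuous function on `G`. -/
def translateB {G : Type*} [AddCommGroup G] [TopologicalSpace G] [IsTopologicalAddGroup G]
    (t : G) (F : BoundedContinuousFunction G ℂ) : BoundedContinuousFunction G ℂ :=
  F.compContinuous ⟨fun s => s - t, continuous_sub_right t⟩

/-- A bounded continuous function on `G` is weakly almost periodic if it is uniformly
continuous and its set of translates is relatively compact in the weak topology. -/
def WeaklyAPFun {G : Type*} [AddCommGroup G] [UniformSpace G] [IsUniformAddGroup G]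
    (F : BoundedContinuousFunction G ℂ) : Prop :=
  UniformContinuous ⇑F ∧
    IsCompact (closure
      ((toWeakSpace ℂ (BoundedContinuousFunction G ℂ)) '' Set.range fun t : G => translateB t F))

/-- A point `x` is weakly almost periodic if `f_x` is weakly almost periodic for every
continuous `f : X → ℂ`. -/
def WeaklyAPPoint (G : Type*) [AddCommGroup G] [UniformSpace G] [IsUniformAddGroup G]
    {X : Type*} [TopologicalSpace X] [CompactSpace X] [AddAction G X] [ContinuousVAdd G X]
    (x : X) : Prop :=
  ∀ f : C(X, ℂ), WeaklyAPFun (G := G) (fnAlong f x)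

/-- A point `x` is Bohr almost periodic if `f_x` is Bohr almost periodic for every
continuous `f : X → ℂ`. -/
def BohrAPPoint (G : Type*) [AddCommGroup G] [TopologicalSpace G] {X : Type*}
    [TopologicalSpace X] [AddAction G X] (x : X) : Prop :=
  ∀ f : C(X, ℂ), BohrAPFun fun t : G => f (t +ᵥ x)

/-- The function `f_t : x ↦ f (t +ᵥ x)` as a continuous function on `X`. -/
def translateCM {G : Type*} [AddCommGroup G] {X : Type*} [TopologicalSpace X] [AddAction G X]
    [ContinuousConstVAdd G X] (t : G) (f : C(X, ℂ)) : C(X, ℂ) :=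
  f.comp ⟨fun x => t +ᵥ x, continuous_const_vadd t⟩

/-- `(X,G)` is a weakly almost periodic dynamical system: for every `f ∈ C(X)` the family
`{f_t : t ∈ G}` is relatively compact in the weak topology of `C(X)`. -/
def WeaklyAPSystem (G : Type*) (X : Type*) [AddCommGroup G] [TopologicalSpace X]
    [CompactSpace X] [T2Space X] [AddAction G X] [ContinuousConstVAdd G X] : Prop :=
  ∀ f : C(X, ℂ),
    IsCompact (closure ((toWeakSpace ℂ C(X, ℂ)) '' Set.range fun t : G => translateCM t f))

open scoped ENNReal

section Averages

variable {G : Type*} [MeasurableSpace G] {μ : Measure G} {B : ℕ → Set G} {n : ℕ}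

lemma avg_mono {f g : G → ℝ} (hf : IntegrableOn f (B n) μ) (hg : IntegrableOn g (B n) μ)
    (hfg : ∀ s, f s ≤ g s) : avg μ B n f ≤ avg μ B n g :=
  mul_le_mul_of_nonneg_left (setIntegral_mono hf hg hfg) (by positivity)

lemma avg_nonneg {f : G → ℝ} (hf : ∀ s, 0 ≤ f s) : 0 ≤ avg μ B n f :=
  mul_nonneg (by positivity) (integral_nonneg hf)

lemma avg_const_mul (c : ℝ) (f : G → ℝ) : avg μ B n (fun s => c * f s) = c * avg μ B n f := by
  rw [avg, avg, integral_const_mul, mul_left_comm]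

lemma avg_add {f g : G → ℝ} (hf : IntegrableOn f (B n) μ) (hg : IntegrableOn g (B n) μ) :
    avg μ B n (fun s => f s + g s) = avg μ B n f + avg μ B n g := by
  rw [avg, avg, avg, integral_add hf hg, mul_add]

lemma avg_const_le {c : ℝ} (hc : 0 ≤ c) : avg μ B n (fun _ => c) ≤ c := by
  rw [avg, setIntegral_const, smul_eq_mul, measureReal_def, ← mul_assoc]
  exact mul_le_of_le_one_left hc inv_mul_le_one

lemma integrableOn_of_measurable_of_bounds (hB : μ (B n) ≠ ∞) {f : G → ℝ} (hf : Measurable f)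
    {C : ℝ} (hf0 : ∀ s, 0 ≤ f s) (hfC : ∀ s, f s ≤ C) : IntegrableOn f (B n) μ :=
  Measure.integrableOn_of_bounded hB hf.aestronglyMeasurable
    (.of_forall fun s => (Real.norm_of_nonneg (hf0 s)).trans_le (hfC s))

lemma avg_le_of_le (hB : μ (B n) ≠ ∞) {f : G → ℝ} (hf : IntegrableOn f (B n) μ) {C : ℝ}
    (hC : 0 ≤ C) (hfC : ∀ s, f s ≤ C) : avg μ B n f ≤ C :=
  (avg_mono hf (integrableOn_const hB) hfC).trans (avg_const_le hC)

end Averages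

lemma limsup_const_add_mul (c : ℝ) {k : ℝ} (hk : 0 ≤ k) {a : ℕ → ℝ} {m M : ℝ}
    (hm : ∀ n, m ≤ a n) (hM : ∀ n, a n ≤ M) :
    limsup (fun n => c + k * a n) atTop = c + k * limsup a atTop :=
  (((monotone_id.const_mul hk).const_add c).map_limsup_of_continuousAt a (by fun_prop)
    (isBoundedUnder_of ⟨M, hM⟩) (isCoboundedUnder_le_of_le _ hm)).symm

lemma limsup_le_limsup_of_le_of_bounds {a b : ℕ → ℝ} {m M : ℝ} (hab : ∀ n, a n ≤ b n)
    (hm : ∀ n, m ≤ a n) (hM : ∀ n, b n ≤ M) : limsup a atTop ≤ limsup b atTop :=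
  limsup_le_limsup (.of_forall hab) (isCoboundedUnder_le_of_le _ hm) (isBoundedUnder_of ⟨M, hM⟩)

section Density

variable {G : Type*} [MeasurableSpace G] [Nonempty G] {μ : Measure G} {B : ℕ → Set G}
  {f : G → ℝ} {C : ℝ}

lemma mul_upperDens_le_upperMean (hB : ∀ n, μ (B n) ≠ ∞) (hf : Measurable f)
    (hf0 : ∀ s, 0 ≤ f s) (hfC : ∀ s, f s ≤ C) {δ : ℝ} (hδ : 0 ≤ δ) :
    δ * upperDens μ B {s | δ ≤ f s} ≤ upperMean μ B f := by
  set ind := {s | δ ≤ f s}.indicator fun _ => (1 : ℝ)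
  have hind0 : ∀ s, 0 ≤ ind s := Set.indicator_nonneg fun _ _ => zero_le_one
  have hind1 : ∀ s, ind s ≤ 1 := Set.indicator_le_self' fun _ _ => zero_le_one
  have markov : ∀ s, δ * ind s ≤ f s := by
    intro s
    by_cases hs : δ ≤ f s
    · simp [ind, hs]
    · simpa [ind, hs] using hf0 s
  have hfint n := integrableOn_of_measurable_of_bounds (hB n) hf hf0 hfC
  have hindint n : IntegrableOn ind (B n) μ :=
    (integrableOn_const (hB n)).indicator (measurableSet_le measurable_const hf)
  calc δ * upperDens μ B {s | δ ≤ f s} = limsup (fun n => 0 + δ * avg μ B n ind) atTop := by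
        rw [limsup_const_add_mul 0 hδ (fun n => avg_nonneg hind0)
          (fun n => avg_le_of_le (hB n) (hindint n) zero_le_one hind1), zero_add]
        rfl
    _ ≤ upperMean μ B f := by
      refine limsup_le_limsup_of_le_of_bounds (fun n => ?_)
        (fun n => add_nonneg le_rfl (mul_nonneg hδ (avg_nonneg hind0)))
        (fun n => avg_le_of_le (hB n) (hfint n) ((hf0 (Classical.arbitrary G)).trans (hfC _)) hfC)
      rw [zero_add, ← avg_const_mul]
      exact avg_mono ((hindint n).const_mul δ) (hfint n) markov

lemma upperMean_le_add_mul_upperDens (hB : ∀ n, μ (B n) ≠ ∞) (hf : Measurable f)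
    (hf0 : ∀ s, 0 ≤ f s) (hfC : ∀ s, f s ≤ C) {δ : ℝ} (hδ : 0 ≤ δ) :
    upperMean μ B f ≤ δ + C * upperDens μ B {s | δ ≤ f s} := by
  set ind := {s | δ ≤ f s}.indicator fun _ => (1 : ℝ)
  have hind0 : ∀ s, 0 ≤ ind s := Set.indicator_nonneg fun _ _ => zero_le_one
  have hind1 : ∀ s, ind s ≤ 1 := Set.indicator_le_self' fun _ _ => zero_le_one
  have hC : 0 ≤ C := (hf0 (Classical.arbitrary G)).trans (hfC _)
  have reverse_markov : ∀ s, f s ≤ δ + C * ind s := by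
    intro s
    by_cases hs : δ ≤ f s
    · simpa [ind, hs] using (hfC s).trans (le_add_of_nonneg_left hδ)
    · simp only [ind, indicator_of_notMem (show s ∉ {s | δ ≤ f s} from hs), mul_zero, add_zero]
      exact (not_le.1 hs).le
  have hfint n := integrableOn_of_measurable_of_bounds (hB n) hf hf0 hfC
  have hindint n : IntegrableOn ind (B n) μ :=
    (integrableOn_const (hB n)).indicator (measurableSet_le measurable_const hf)
  have havg_ind n : avg μ B n ind ≤ 1 := avg_le_of_le (hB n) (hindint n) zero_le_one hind1
  have havg n : avg μ B n f ≤ δ + C * avg μ B n ind :=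
    calc avg μ B n f ≤ avg μ B n fun s => δ + C * ind s :=
          avg_mono (hfint n) ((integrableOn_const (hB n)).add ((hindint n).const_mul C))
            reverse_markov
      _ = avg μ B n (fun _ => δ) + C * avg μ B n ind := by
          rw [avg_add (integrableOn_const (hB n)) ((hindint n).const_mul C), avg_const_mul]
      _ ≤ δ + C * avg μ B n ind := by grw [avg_const_le hδ]
  calc upperMean μ B f ≤ limsup (fun n => δ + C * avg μ B n ind) atTop :=
        limsup_le_limsup_of_le_of_bounds havg (fun n => avg_nonneg hf0)
          (fun n => add_le_add_right (mul_le_of_le_one_right hC (havg_ind n)) δ)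
    _ = δ + C * upperDens μ B {s | δ ≤ f s} :=
        limsup_const_add_mul δ hC (fun n => avg_nonneg hind0) havg_ind

end Density

namespace IsCompatMetric

variable {X : Type*} [TopologicalSpace X] {d : X → X → ℝ}

lemma nonneg (hd : IsCompatMetric d) (y z : X) : 0 ≤ d y z := by
  linarith [hd.triangle y z y, hd.symm y z, hd.refl y]

lemma abs_sub_le (hd : IsCompatMetric d) (y z y' z' : X) :
    |d y z - d y' z'| ≤ d y' y + d z' z := by
  rw [abs_sub_le_iff]
  constructor
  · linarith [hd.triangle y y' z, hd.triangle y' z' z, hd.symm y' y]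
  · linarith [hd.triangle y' y z', hd.triangle y z z', hd.symm z' z]

lemma tendsto_nhds_zero (hd : IsCompatMetric d) (y : X) : Tendsto (d y) (𝓝 y) (𝓝 0) := by
  rw [Metric.tendsto_nhds]
  intro ε hε
  filter_upwards [(hd.nhds_basis y).mem_of_mem hε] with z hz
  rwa [Real.dist_eq, sub_zero, abs_of_nonneg (hd.nonneg y z)]

lemma continuous (hd : IsCompatMetric d) : Continuous fun p : X × X => d p.1 p.2 := by
  refine continuous_iff_continuousAt.2 fun p => tendsto_iff_dist_tendsto_zero.2 ?_
  have hsum : Tendsto (fun q : X × X => d p.1 q.1 + d p.2 q.2) (𝓝 p) (𝓝 0) := by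
    simpa using ((hd.tendsto_nhds_zero p.1).comp continuousAt_fst).add
      ((hd.tendsto_nhds_zero p.2).comp continuousAt_snd)
  exact squeeze_zero (fun _ => dist_nonneg)
    (fun q => (Real.dist_eq _ _).trans_le (hd.abs_sub_le _ _ _ _)) hsum

lemma exists_bound [CompactSpace X] (hd : IsCompatMetric d) : ∃ C, ∀ y z, d y z ≤ C := by
  obtain ⟨C, hC⟩ := (isCompact_range hd.continuous).bddAbove
  exact ⟨C, fun y z => hC ⟨(y, z), rfl⟩⟩

end IsCompatMetric

lemma RelDense.mono {G : Type*} [AddCommGroup G] [TopologicalSpace G] {A A' : Set G}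
    (hA : RelDense A) (h : A ⊆ A') : RelDense A' := by
  obtain ⟨K, hK, hcover⟩ := hA
  refine ⟨K, hK, fun g => ?_⟩
  obtain ⟨a, ha, hga⟩ := hcover g
  exact ⟨a, h ha, hga⟩

lemma IsFolner.measure_ne_top {G : Type*} [AddCommGroup G] [TopologicalSpace G]
    [MeasurableSpace G] {μ : Measure G} [IsFiniteMeasureOnCompacts μ] {B : ℕ → Set G}
    (hB : IsFolner μ B) (n : ℕ) : μ (B n) ≠ ∞ :=
  ((measure_mono subset_closure).trans_lt (hB.relCompact n).measure_lt_top).ne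

theorem statement_6_general
    {G : Type*} [AddCommGroup G] [TopologicalSpace G]
    [MeasurableSpace G] [BorelSpace G]
    (μ : Measure G) [μ.IsAddHaarMeasure] (B : ℕ → Set G) (hB : IsFolner μ B)
    {X : Type*} [TopologicalSpace X] [CompactSpace X]
    [AddAction G X] [ContinuousVAdd G X]
    (d : X → X → ℝ) (hd : IsCompatMetric d) (x : X) :
    MeanAPPointWith μ B d x ↔
      ∀ δ : ℝ, 0 < δ → ∀ ε : ℝ, 0 < ε →
        RelDense {t : G | upperDens μ B {s : G | δ ≤ d (s +ᵥ x) (t +ᵥ (s +ᵥ x))} < ε} := by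
  obtain ⟨C, hC⟩ := hd.exists_bound
  set f : G → G → ℝ := fun t s => d (s +ᵥ x) (s +ᵥ (t +ᵥ x))
  have hf t : Measurable (f t) := (hd.continuous.comp (f := fun s : G => (s +ᵥ x, s +ᵥ (t +ᵥ x)))
    (by fun_prop)).measurable
  have hsets δ t : {s : G | δ ≤ d (s +ᵥ x) (t +ᵥ (s +ᵥ x))} = {s | δ ≤ f t s} := by
    simp only [f, vadd_vadd, add_comm t]
  have markov t δ (hδ : 0 ≤ δ) := mul_upperDens_le_upperMean hB.measure_ne_top (hf t)
    (fun _ => hd.nonneg _ _) (fun _ => hC _ _) hδ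
  have reverse_markov t δ (hδ : 0 ≤ δ) := upperMean_le_add_mul_upperDens hB.measure_ne_top (hf t)
    (fun _ => hd.nonneg _ _) (fun _ => hC _ _) hδ
  constructor
  · intro hx δ hδ ε hε
    refine (hx (δ * ε) (by positivity)).mono fun t ht => ?_
    rw [mem_ofPred_eq, hsets]
    exact lt_of_mul_lt_mul_left ((markov t δ hδ.le).trans_lt ht) hδ.le
  · intro hx ε hε
    have hC0 : 0 ≤ C := (hd.nonneg x x).trans (hC x x)
    refine (hx (ε / 2) (by positivity) (ε / (2 * (C + 1))) (by positivity)).mono fun t ht => ?_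
    rw [mem_ofPred_eq, hsets] at ht
    calc upperMean μ B (f t) ≤ ε / 2 + C * upperDens μ B {s | ε / 2 ≤ f t s} :=
          reverse_markov t (ε / 2) (by positivity)
      _ ≤ ε / 2 + C * (ε / (2 * (C + 1))) := by gcongr
      _ < ε := by
          field_simp
          nlinarith

/-- Mean almost periodicity of a point via density of superlevel sets. -/
theorem statement_6
    {G : Type*} [AddCommGroup G] [TopologicalSpace G] [IsTopologicalAddGroup G] [T2Space G]
    [LocallyCompactSpace G] [SigmaCompactSpace G] [MeasurableSpace G] [BorelSpace G]
    (μ : Measure G) [μ.IsAddHaarMeasure] (B : ℕ → Set G) (hB : IsFolner μ B)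
    {X : Type*} [TopologicalSpace X] [CompactSpace X] [T2Space X]
    [AddAction G X] [ContinuousVAdd G X]
    (d : X → X → ℝ) (hd : IsCompatMetric d) (x : X) :
    MeanAPPointWith μ B d x ↔
      ∀ δ : ℝ, 0 < δ → ∀ ε : ℝ, 0 < ε →
        RelDense {t : G | upperDens μ B {s : G | δ ≤ d (s +ᵥ x) (t +ᵥ (s +ᵥ x))} < ε} :=
  statement_6_general μ B hB d hd x

end APPaper
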